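/- arXiv:1805.08840 — 2 statements merged into one kernel-verified Lean document; each statement's English description precedes it below -/
import Mathlib

section
/- The plane can be tiled by infinitely many pairwise noncongruent squares whose side lengths are bounded from below by a positive constant: there exists an infinite family of squares in ℝ² with pairwise disjoint interiors whose union is all of ℝ², such that no two of the squares are congruent and all side lengths are at least some fixed positive constant. -/
noncomputable section

abbrev Pt : Type := EuclideanSpace ℝ (Fin 2)

/-- A square in the plane, given by its four vertices in cyclic order: the four sides
have the same positive length and both diagonals have length `√2` times the side
length (this characterizes the vertex sets of squares). -/
structure Sq : Type where
  A : Pt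
  B : Pt
  C : Pt
  D : Pt
  side_pos : 0 < dist A B
  eqAB : dist A B = dist B C
  eqBC : dist B C = dist C D
  eqCD : dist C D = dist D A
  diagAC : dist A C = Real.sqrt 2 * dist A B
  diagBD : dist B D = Real.sqrt 2 * dist A B

def Sq.set (S : Sq) : Set Pt := convexHull ℝ {S.A, S.B, S.C, S.D}

def Sq.side (S : Sq) : ℝ := dist S.A S.B

def SetCongruent (s t : Set Pt) : Prop := ∃ f : Pt ≃ᵢ Pt, f '' s = t

/-!
Start from Moroń's tiling of the `33 × 32` rectangle by nine squares with the distinct sides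
`1, 4, 7, 8, 9, 10, 14, 15, 18`. Then glue squares onto the current rectangle, cycling through
its right, top, left and bottom edges, each square having the full length of the edge it is glued
to, so that the union is again a rectangle. Each glued square is longer than the previous one by
the other dimension of the rectangle, so the glued sides increase strictly from `32` on and all
sides in the tiling are distinct and at least `1`. Every four steps each edge of the rectangle
moves out by at least `32`, so the rectangles exhaust the plane. Squares of different sides are
not congruent, since their diameters `√2 · side` differ.
-/

open Set Fin.NatCast

namespace Sq

lemma dist_le_of_mem (S : Sq) {p q : Pt} (hp : p ∈ ({S.A, S.B, S.C, S.D} : Set Pt))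
    (hq : q ∈ ({S.A, S.B, S.C, S.D} : Set Pt)) : dist p q ≤ √2 * S.side := by
  unfold side
  have side_le : dist S.A S.B ≤ √2 * dist S.A S.B :=
    le_mul_of_one_le_left dist_nonneg Real.one_lt_sqrt_two.le
  simp only [mem_insert_iff, mem_singleton_iff] at hp hq
  rcases hp with rfl | rfl | rfl | rfl <;> rcases hq with rfl | rfl | rfl | rfl <;>
    linarith [S.side_pos, S.eqAB, S.eqBC, S.eqCD, S.diagAC, S.diagBD, dist_self S.A,
      dist_self S.B, dist_self S.C, dist_self S.D, dist_comm S.A S.B, dist_comm S.A S.C,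
      dist_comm S.A S.D, dist_comm S.B S.C, dist_comm S.B S.D, dist_comm S.C S.D]

lemma diam_set (S : Sq) : Metric.diam S.set = √2 * S.side := by
  rw [set, convexHull_diam]
  apply le_antisymm
  · exact Metric.diam_le_of_forall_dist_le (mul_nonneg (Real.sqrt_nonneg 2) S.side_pos.le)
      fun p hp q hq => S.dist_le_of_mem hp hq
  · exact S.diagAC.symm.trans_le <|
      Metric.dist_le_diam_of_mem (Set.toFinite _).isBounded (by simp) (by simp)

lemma side_eq_of_setCongruent {S S' : Sq} (h : SetCongruent S.set S'.set) : S.side = S'.side := by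
  obtain ⟨f, hf⟩ := h
  have := f.diam_image S.set
  rw [hf, diam_set, diam_set] at this
  exact (mul_left_cancel₀ (by positivity) this).symm

end Sq

def coords : Pt ≃L[ℝ] ℝ × ℝ :=
  (EuclideanSpace.equiv (Fin 2) ℝ).trans (ContinuousLinearEquiv.finTwoArrow ℝ ℝ)

lemma dist_coords_symm (a b : ℝ × ℝ) :
    dist (coords.symm a) (coords.symm b) = √((a.1 - b.1) ^ 2 + (a.2 - b.2) ^ 2) := by
  simp [EuclideanSpace.dist_eq, coords, Fin.sum_univ_two, Real.dist_eq, sq_abs]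

structure Rect where
  left : ℝ
  bottom : ℝ
  right : ℝ
  top : ℝ

namespace Rect

def set (R : Rect) : Set (ℝ × ℝ) := Icc R.left R.right ×ˢ Icc R.bottom R.top

def width (R : Rect) : ℝ := R.right - R.left

def height (R : Rect) : ℝ := R.top - R.bottom

lemma interior_set (R : Rect) :
    interior R.set = Ioo R.left R.right ×ˢ Ioo R.bottom R.top := by
  rw [set, interior_prod_eq, interior_Icc, interior_Icc]

lemma disjoint_interior_set {R S : Rect}
    (h : R.right ≤ S.left ∨ S.right ≤ R.left ∨ R.top ≤ S.bottom ∨ S.top ≤ R.bottom) :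
    Disjoint (interior R.set) (interior S.set) := by
  rw [interior_set, interior_set, Set.disjoint_left]
  rintro p ⟨⟨h1, h2⟩, h3, h4⟩ ⟨⟨h5, h6⟩, h7, h8⟩
  rcases h with h | h | h | h <;> linarith

end Rect

structure Tile where
  x : ℝ
  y : ℝ
  side : ℝ

namespace Tile

def rect (T : Tile) : Rect := ⟨T.x, T.y, T.x + T.side, T.y + T.side⟩

def toSq (T : Tile) (h : 0 < T.side) : Sq where
  A := coords.symm (T.x, T.y)
  B := coords.symm (T.x + T.side, T.y)
  C := coords.symm (T.x + T.side, T.y + T.side)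
  D := coords.symm (T.x, T.y + T.side)
  side_pos := by simpa [dist_coords_symm] using pow_pos h 2
  eqAB := by simp [dist_coords_symm]
  eqBC := by simp [dist_coords_symm]
  eqCD := by simp [dist_coords_symm]
  diagAC := by simp [dist_coords_symm, ← two_mul, Real.sqrt_mul zero_le_two]
  diagBD := by simp [dist_coords_symm, ← two_mul, Real.sqrt_mul zero_le_two]

lemma side_toSq (T : Tile) (h : 0 < T.side) : (T.toSq h).side = T.side := by
  simp [toSq, Sq.side, dist_coords_symm, h.le]

lemma set_toSq (T : Tile) (h : 0 < T.side) : (T.toSq h).set = coords ⁻¹' T.rect.set := by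
  have vertices : ({(T.x, T.y), (T.x + T.side, T.y), (T.x + T.side, T.y + T.side),
      (T.x, T.y + T.side)} : Set (ℝ × ℝ)) = {T.x, T.x + T.side} ×ˢ {T.y, T.y + T.side} := by
    ext p; simp only [mem_insert_iff, mem_singleton_iff, mem_prod, Prod.ext_iff]; tauto
  have hx : T.x ≤ T.x + T.side := by linarith
  have hy : T.y ≤ T.y + T.side := by linarith
  simp only [Sq.set, toSq, rect, Rect.set]
  rw [← coords.image_symm_eq_preimage, ← segment_eq_Icc hx, ← segment_eq_Icc hy,
    ← convexHull_pair, ← convexHull_pair, ← convexHull_prod, ← vertices]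
  simpa [image_insert_eq] using (coords.symm.toLinearMap.image_convexHull
    {(T.x, T.y), (T.x + T.side, T.y), (T.x + T.side, T.y + T.side), (T.x, T.y + T.side)}).symm

end Tile

namespace Rect

/-- The square glued onto the right (`0`), top (`1`), left (`2`) or bottom (`3`) edge of `R`. -/
def attach (R : Rect) : Fin 4 → Tile
  | 0 => ⟨R.right, R.bottom, R.height⟩
  | 1 => ⟨R.left, R.top, R.width⟩
  | 2 => ⟨R.left - R.height, R.bottom, R.height⟩
  | 3 => ⟨R.left, R.bottom - R.width, R.width⟩

def extend (R : Rect) : Fin 4 → Rect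
  | 0 => { R with right := R.right + R.height }
  | 1 => { R with top := R.top + R.width }
  | 2 => { R with left := R.left - R.height }
  | 3 => { R with bottom := R.bottom - R.width }

lemma set_extend {R : Rect} (hw : 0 ≤ R.width) (hh : 0 ≤ R.height) (d : Fin 4) :
    (R.extend d).set = R.set ∪ (R.attach d).rect.set := by
  simp only [width, height, sub_nonneg] at hw hh
  fin_cases d <;>
    simp only [extend, attach, Tile.rect, set, width, height, add_sub_cancel, sub_add_cancel,
      ← union_prod, ← prod_union]
  · rw [Icc_union_Icc_eq_Icc hw (by linarith)]
  · rw [Icc_union_Icc_eq_Icc hh (by linarith)]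
  · rw [union_comm, Icc_union_Icc_eq_Icc (by linarith) hw]
  · rw [union_comm, Icc_union_Icc_eq_Icc (by linarith) hh]

lemma disjoint_interior_attach (R : Rect) (d : Fin 4) :
    Disjoint (interior R.set) (interior (R.attach d).rect.set) := by
  apply disjoint_interior_set
  fin_cases d <;> simp [attach, Tile.rect, width, height]

lemma width_le_extend {R : Rect} (hh : 0 ≤ R.height) (d : Fin 4) :
    R.width ≤ (R.extend d).width := by
  match d with
  | 0 | 1 | 2 | 3 => simp only [extend, width]; linarith

lemma height_le_extend {R : Rect} (hw : 0 ≤ R.width) (d : Fin 4) :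
    R.height ≤ (R.extend d).height := by
  match d with
  | 0 | 1 | 2 | 3 => simp only [extend, height]; linarith

lemma side_attach_lt_extend_attach {R : Rect} (hw : 0 < R.width) (hh : 0 < R.height)
    (d : Fin 4) :
    (R.attach d).side < ((R.extend d).attach (d + 1)).side := by
  simp only [width, height] at hw hh
  match d with
  | 0 | 1 | 2 | 3 => simp only [extend, attach, width, height, Fin.reduceAdd]; linarith

lemma extend_four {R : Rect} {c : ℝ} (hw : c ≤ R.width) (hh : c ≤ R.height) (hc : 0 ≤ c)
    (d : Fin 4) :
    let S := (((R.extend d).extend (d + 1)).extend (d + 2)).extend (d + 3)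
    S.left ≤ R.left - c ∧ S.bottom ≤ R.bottom - c ∧
      R.right + c ≤ S.right ∧ R.top + c ≤ S.top := by
  simp only [width, height] at hw hh
  match d with
  | 0 | 1 | 2 | 3 =>
    simp only [extend, width, height, Fin.reduceAdd]
    refine ⟨?_, ?_, ?_, ?_⟩ <;> linarith

end Rect

section Accretion

variable {X : Type*} {F T : ℕ → Set X}

lemma monotone_of_succ_eq_union (hF : ∀ n, F (n + 1) = F n ∪ T n) : Monotone F :=
  monotone_nat_of_le_succ fun n => (hF n).symm ▸ subset_union_left

lemma subset_of_succ_eq_union (hF : ∀ n, F (n + 1) = F n ∪ T n) {m n : ℕ} (h : m < n) :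
    T m ⊆ F n :=
  ((hF m).symm ▸ subset_union_right).trans (monotone_of_succ_eq_union hF h)

lemma iUnion_eq_of_succ_eq_union (hF : ∀ n, F (n + 1) = F n ∪ T n) :
    ⋃ n, F n = F 0 ∪ ⋃ n, T n := by
  refine subset_antisymm (iUnion_subset fun n => ?_) <|
    union_subset (subset_iUnion F 0) (iUnion_subset fun n =>
      (subset_of_succ_eq_union hF n.lt_succ_self).trans (subset_iUnion F (n + 1)))
  induction n with
  | zero => exact subset_union_left
  | succ n ih =>
    exact (hF n).symm ▸ union_subset ih (subset_union_of_subset_right (subset_iUnion T n) _)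

lemma disjoint_interior_of_succ_eq_union [TopologicalSpace X] (hF : ∀ n, F (n + 1) = F n ∪ T n)
    (hT : ∀ n, Disjoint (interior (F n)) (interior (T n))) {m n : ℕ} (h : m < n) :
    Disjoint (interior (T m)) (interior (T n)) :=
  (hT n).mono_left (interior_mono (subset_of_succ_eq_union hF h))

end Accretion

def moronTile : Fin 9 → Tile
  | 0 => ⟨0, 14, 18⟩
  | 1 => ⟨18, 17, 15⟩
  | 2 => ⟨0, 0, 14⟩
  | 3 => ⟨14, 0, 10⟩
  | 4 => ⟨24, 0, 9⟩
  | 5 => ⟨25, 9, 8⟩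
  | 6 => ⟨18, 10, 7⟩
  | 7 => ⟨14, 10, 4⟩
  | 8 => ⟨24, 9, 1⟩

def moronRect : Rect := ⟨0, 0, 33, 32⟩

lemma moronTile_subset (i : Fin 9) : (moronTile i).rect.set ⊆ moronRect.set := by
  fin_cases i <;> apply prod_mono <;> apply Icc_subset_Icc <;>
    norm_num [moronTile, moronRect, Tile.rect]

lemma moronRect_subset : moronRect.set ⊆ ⋃ i, (moronTile i).rect.set := by
  rintro ⟨x, y⟩ ⟨⟨hx₀, hx₁⟩, hy₀, hy₁⟩
  simp only [mem_iUnion, Fin.exists_fin_succ, Fin.exists_fin_zero, moronTile, moronRect, Tile.rect,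
    Rect.set, mem_prod, mem_Icc] at *
  grind

lemma moronTile_pairwise_disjoint : Pairwise fun i j =>
    Disjoint (interior (moronTile i).rect.set) (interior (moronTile j).rect.set) := by
  intro i j hij
  apply Rect.disjoint_interior_set
  fin_cases i <;> fin_cases j <;> norm_num [moronTile, Tile.rect] at *

lemma moronTile_side_injective : Function.Injective fun i => (moronTile i).side := by
  intro i j hij
  fin_cases i <;> fin_cases j <;> norm_num [moronTile] at *

lemma moronTile_side_mem (i : Fin 9) : (moronTile i).side ∈ Icc 1 18 := by
  fin_cases i <;> norm_num [moronTile]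

-- The cast `ℕ → Fin 4` reduces mod `4`, so the edges are used cyclically.
def spiral : ℕ → Rect
  | 0 => moronRect
  | n + 1 => (spiral n).extend n

def spiralTile (n : ℕ) : Tile := (spiral n).attach n

lemma spiral_dims_ge (n : ℕ) : 32 ≤ (spiral n).width ∧ 32 ≤ (spiral n).height := by
  induction n with
  | zero => norm_num [spiral, moronRect, Rect.width, Rect.height]
  | succ n ih =>
    exact ⟨ih.1.trans (Rect.width_le_extend (by linarith) _),
      ih.2.trans (Rect.height_le_extend (by linarith) _)⟩

lemma spiral_add_four (n : ℕ) :
    spiral (n + 4) = ((((spiral n).extend n).extend (n + 1)).extend (n + 2)).extend (n + 3) := by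
  simp only [spiral]
  push_cast
  rfl

lemma spiral_set_succ (n : ℕ) :
    (spiral (n + 1)).set = (spiral n).set ∪ (spiralTile n).rect.set :=
  Rect.set_extend (by linarith [spiral_dims_ge n]) (by linarith [spiral_dims_ge n]) _

lemma spiralTile_side_strictMono : StrictMono fun n => (spiralTile n).side :=
  strictMono_nat_of_lt_succ fun n => by
    simpa [spiralTile, spiral] using Rect.side_attach_lt_extend_attach
      (by linarith [spiral_dims_ge n]) (by linarith [spiral_dims_ge n]) (n : Fin 4)

lemma spiralTile_side_ge (n : ℕ) : 32 ≤ (spiralTile n).side := by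
  have h0 : (spiralTile 0).side = 32 := by
    norm_num [spiralTile, spiral, Rect.attach, moronRect, Rect.height]
  exact h0 ▸ spiralTile_side_strictMono.monotone n.zero_le

lemma spiral_four_mul_bounds (k : ℕ) :
    (spiral (4 * k)).left ≤ -(32 * k) ∧ (spiral (4 * k)).bottom ≤ -(32 * k) ∧
      32 * k ≤ (spiral (4 * k)).right ∧ 32 * k ≤ (spiral (4 * k)).top := by
  induction k with
  | zero => norm_num [spiral, moronRect]
  | succ k ih =>
    obtain ⟨hl, hb, hr, ht⟩ := Rect.extend_four (spiral_dims_ge (4 * k)).1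
      (spiral_dims_ge (4 * k)).2 (by norm_num) (4 * k : ℕ)
    rw [Nat.mul_succ, spiral_add_four]
    push_cast
    refine ⟨?_, ?_, ?_, ?_⟩ <;> linarith [ih.1, ih.2.1, ih.2.2.1, ih.2.2.2]

lemma exists_mem_spiral (p : ℝ × ℝ) : ∃ n, p ∈ (spiral n).set := by
  obtain ⟨k, hk⟩ := exists_nat_ge (|p.1| + |p.2|)
  obtain ⟨hl, hb, hr, ht⟩ := spiral_four_mul_bounds k
  refine ⟨4 * k, ⟨?_, ?_⟩, ?_, ?_⟩ <;>
    linarith [neg_abs_le p.1, le_abs_self p.1, neg_abs_le p.2, le_abs_self p.2, abs_nonneg p.1,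
      abs_nonneg p.2]

def tile : Fin 9 ⊕ ℕ → Tile := Sum.elim moronTile spiralTile

lemma iUnion_tile : ⋃ i, (tile i).rect.set = univ := by
  refine eq_univ_of_forall fun p => ?_
  obtain ⟨n, hn⟩ := exists_mem_spiral p
  have hp : p ∈ (spiral 0).set ∪ ⋃ n, (spiralTile n).rect.set := by
    rw [← iUnion_eq_of_succ_eq_union (F := fun n => (spiral n).set) spiral_set_succ]
    exact mem_iUnion.2 ⟨n, hn⟩
  rw [iUnion_sum]
  exact hp.imp_left fun h => moronRect_subset h

lemma moronTile_subset_spiral (i : Fin 9) (n : ℕ) : (moronTile i).rect.set ⊆ (spiral n).set :=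
  (moronTile_subset i).trans
    (monotone_of_succ_eq_union (F := fun n => (spiral n).set) spiral_set_succ n.zero_le)

lemma pairwise_disjoint_interior_tile :
    Pairwise fun i j => Disjoint (interior (tile i).rect.set) (interior (tile j).rect.set) := by
  have spiral_disj (n : ℕ) :
      Disjoint (interior (spiral n).set) (interior (spiralTile n).rect.set) :=
    Rect.disjoint_interior_attach _ _
  have seed_spiral (i : Fin 9) (n : ℕ) :
      Disjoint (interior (moronTile i).rect.set) (interior (spiralTile n).rect.set) :=
    (spiral_disj n).mono_left (interior_mono (moronTile_subset_spiral i n))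
  rintro (i | m) (j | n) hij
  · exact moronTile_pairwise_disjoint (fun h => hij (congrArg Sum.inl h))
  · exact seed_spiral i n
  · exact (seed_spiral j m).symm
  · have hmn : m ≠ n := fun h => hij (congrArg Sum.inr h)
    rcases hmn.lt_or_gt with h | h
    · exact disjoint_interior_of_succ_eq_union spiral_set_succ spiral_disj h
    · exact (disjoint_interior_of_succ_eq_union spiral_set_succ spiral_disj h).symm

lemma tile_side_injective : Function.Injective fun i => (tile i).side := by
  have seed_lt (i : Fin 9) (n : ℕ) : (moronTile i).side < (spiralTile n).side := by
    linarith [(moronTile_side_mem i).2, spiralTile_side_ge n]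
  rintro (i | m) (j | n) h <;> simp only [tile, Sum.elim_inl, Sum.elim_inr] at h
  · exact congrArg _ (moronTile_side_injective h)
  · exact absurd h (seed_lt i n).ne
  · exact absurd h (seed_lt j m).ne'
  · exact congrArg _ (spiralTile_side_strictMono.injective h)

lemma one_le_tile_side (i : Fin 9 ⊕ ℕ) : 1 ≤ (tile i).side := by
  rcases i with i | n
  · exact (moronTile_side_mem i).1
  · exact le_trans (by norm_num) (spiralTile_side_ge n)

def tileSq (i : Fin 9 ⊕ ℕ) : Sq := (tile i).toSq (by linarith [one_le_tile_side i])

lemma tileSq_set (i : Fin 9 ⊕ ℕ) : (tileSq i).set = coords ⁻¹' (tile i).rect.set :=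
  Tile.set_toSq _ _

lemma interior_tileSq_set (i : Fin 9 ⊕ ℕ) :
    interior (tileSq i).set = coords ⁻¹' interior (tile i).rect.set := by
  rw [tileSq_set]
  exact (coords.toHomeomorph.preimage_interior _).symm

lemma tileSq_side (i : Fin 9 ⊕ ℕ) : (tileSq i).side = (tile i).side :=
  Tile.side_toSq _ _

/-- The plane can be tiled by infinitely many pairwise noncongruent squares whose
side lengths are bounded from below by a positive constant. -/
theorem stmt_4 :
    ∃ (𝒮 : Set Sq) (c : ℝ),
      𝒮.Infinite ∧
      (∀ S ∈ 𝒮, ∀ S' ∈ 𝒮, S ≠ S' → Disjoint (interior S.set) (interior S'.set)) ∧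
      (⋃ S ∈ 𝒮, S.set) = Set.univ ∧
      (∀ S ∈ 𝒮, ∀ S' ∈ 𝒮, S ≠ S' → ¬ SetCongruent S.set S'.set) ∧
      0 < c ∧ (∀ S ∈ 𝒮, c ≤ S.side) := by
  have side_injective : Function.Injective (Sq.side ∘ tileSq) := by
    simpa only [Function.comp_def, tileSq_side] using tile_side_injective
  refine ⟨range tileSq, 1, infinite_range_of_injective side_injective.of_comp,
    ?_, ?_, ?_, one_pos, ?_⟩
  · rintro _ ⟨i, rfl⟩ _ ⟨j, rfl⟩ hij
    rw [interior_tileSq_set, interior_tileSq_set]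
    exact (pairwise_disjoint_interior_tile fun h => hij (congrArg tileSq h)).preimage _
  · rw [biUnion_range]
    simp only [tileSq_set, ← preimage_iUnion, iUnion_tile, preimage_univ]
  · rintro _ ⟨i, rfl⟩ _ ⟨j, rfl⟩ hij hcong
    exact hij (congrArg tileSq (side_injective (Sq.side_eq_of_setCongruent hcong)))
  · rintro _ ⟨i, rfl⟩
    exact (tileSq_side i).symm ▸ one_le_tile_side i

end
end

section
/- In 𝒯, every uncut edge of a triangle of 𝒯 continues at least at one of its two endpoints. -/
/-!
Let `M` be the midpoint of the uncut edge `PQ` of `T`. Since the side lengths are bounded below,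
the tiling is locally finite, so the union of the other triangles is closed; it contains the
complement of `T`, hence its closure, which contains `M` because `M` is on the boundary of `T`. So `M` lies in a triangle
`T' ≠ T`, and on an edge `E₁E₂` of `T'` because `T'` does not meet the interior of `T`. Since `T'`
lies on the far side of the line `PQ` and `M` is interior to `E₁E₂`, the whole edge `E₁E₂` lies
on that line. Its endpoints are not interior points of `PQ` (the edge is uncut) and `E₁E₂ ≠ PQ`
(no shared side), so `P` or `Q` is interior to `E₁E₂`: the edge continues there.
-/

noncomputable section

/-- An equilateral triangle in the plane, given by its three vertices. -/
structure EqTri : Type where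
  A : Pt
  B : Pt
  C : Pt
  indep : AffineIndependent ℝ ![A, B, C]
  eqAB : dist A B = dist B C
  eqBC : dist B C = dist C A

/-- The (closed) triangle as a subset of the plane. -/
def EqTri.set (T : EqTri) : Set Pt := convexHull ℝ {T.A, T.B, T.C}

/-- The side length of an equilateral triangle. -/
def EqTri.side (T : EqTri) : ℝ := dist T.A T.B

/-- The vertex set of a triangle. -/
def EqTri.vertices (T : EqTri) : Set Pt := {T.A, T.B, T.C}

/-- The ordered pair `(P, Q)` spans an edge of `T`. -/
def EqTri.IsEdge (T : EqTri) (P Q : Pt) : Prop :=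
  (P = T.A ∧ Q = T.B) ∨ (P = T.B ∧ Q = T.A) ∨
  (P = T.B ∧ Q = T.C) ∨ (P = T.C ∧ Q = T.B) ∨
  (P = T.C ∧ Q = T.A) ∨ (P = T.A ∧ Q = T.C)

/-- The edges (sides) of a triangle, as subsets of the plane. -/
def EqTri.edges (T : EqTri) : Set (Set Pt) :=
  {segment ℝ T.A T.B, segment ℝ T.B T.C, segment ℝ T.C T.A}

/-- A family of equilateral triangles tiles the plane: pairwise disjoint interiors,
union is everything. -/
def IsTiling (𝒯 : Set EqTri) : Prop :=
  (∀ T ∈ 𝒯, ∀ T' ∈ 𝒯, T ≠ T' → Disjoint (interior T.set) (interior T'.set)) ∧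
  (⋃ T ∈ 𝒯, T.set) = Set.univ

/-- No two (distinct) triangles of the family share a side. -/
def NoSharedSide (𝒯 : Set EqTri) : Prop :=
  ∀ T ∈ 𝒯, ∀ T' ∈ 𝒯, T ≠ T' → ∀ e ∈ T.edges, ∀ e' ∈ T'.edges, e ≠ e'

/-- The side lengths of the triangles of the family are bounded below by a positive
constant. -/
def SidesBoundedBelow (𝒯 : Set EqTri) : Prop :=
  ∃ c : ℝ, 0 < c ∧ ∀ T ∈ 𝒯, c ≤ T.side

/-- The standing assumptions: `𝒯` is a tiling of the plane by equilateral triangles,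
side lengths bounded below by a positive constant, no two triangles share a side. -/
def GoodTiling (𝒯 : Set EqTri) : Prop :=
  IsTiling 𝒯 ∧ SidesBoundedBelow 𝒯 ∧ NoSharedSide 𝒯

/-- The edge `[P,Q]` of `T ∈ 𝒯` is subdivided: some interior point of it is a vertex of
another triangle of the tiling. -/
def Subdivided (𝒯 : Set EqTri) (T : EqTri) (P Q : Pt) : Prop :=
  ∃ T' ∈ 𝒯, T' ≠ T ∧ ∃ V ∈ T'.vertices, V ∈ openSegment ℝ P Q

/-- The edge `[A,B]` of `T ∈ 𝒯` continues at `A`: the point `A` lies in the interior of an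
edge `e` of another triangle of the tiling, and `e` contains an interior point of `[A,B]`. -/
def ContinuesAt (𝒯 : Set EqTri) (T : EqTri) (A B : Pt) : Prop :=
  ∃ T' ∈ 𝒯, T' ≠ T ∧ ∃ P Q : Pt, T'.IsEdge P Q ∧ A ∈ openSegment ℝ P Q ∧
    ∃ X ∈ segment ℝ P Q, X ∈ openSegment ℝ A B

/-- A triangle of the tiling is small if all three of its edges are uncut. -/
def SmallTri (𝒯 : Set EqTri) (T : EqTri) : Prop :=
  ¬ Subdivided 𝒯 T T.A T.B ∧ ¬ Subdivided 𝒯 T T.B T.C ∧ ¬ Subdivided 𝒯 T T.C T.A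

/-- A triangle of the tiling is large if all three of its edges are subdivided. -/
def LargeTri (𝒯 : Set EqTri) (T : EqTri) : Prop :=
  Subdivided 𝒯 T T.A T.B ∧ Subdivided 𝒯 T T.B T.C ∧ Subdivided 𝒯 T T.C T.A

/-- A triangle of the tiling is improper if it has an uncut edge and also an edge that
continues at neither of its endpoints. -/
def ImproperTri (𝒯 : Set EqTri) (T : EqTri) : Prop :=
  (∃ P Q : Pt, T.IsEdge P Q ∧ ¬ Subdivided 𝒯 T P Q) ∧
  (∃ P Q : Pt, T.IsEdge P Q ∧ ¬ ContinuesAt 𝒯 T P Q ∧ ¬ ContinuesAt 𝒯 T Q P)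

/-- Two subsets of the plane are congruent if some isometry of the plane maps one
onto the other. -/
def PtCongruent (s t : Set Pt) : Prop := ∃ f : Pt ≃ᵢ Pt, f '' s = t

open Set Metric Filter Topology MeasureTheory RealInnerProductSpace AffineMap

section Barycentric

variable {P Q R : Pt}

def triangleBasis (h : AffineIndependent ℝ ![P, Q, R]) : AffineBasis (Fin 3) ℝ Pt :=
  ⟨![P, Q, R], h, by
    rw [h.affineSpan_eq_top_iff_card_eq_finrank_add_one]
    simp⟩

@[simp] lemma coe_triangleBasis (h : AffineIndependent ℝ ![P, Q, R]) :
    ⇑(triangleBasis h) = ![P, Q, R] := rfl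

lemma triangleBasis_coord_add (h : AffineIndependent ℝ ![P, Q, R]) (x : Pt) :
    (triangleBasis h).coord 0 x + (triangleBasis h).coord 1 x
      + (triangleBasis h).coord 2 x = 1 := by
  have := (triangleBasis h).sum_coord_apply_eq_one x
  rwa [Fin.sum_univ_three] at this

lemma triangleBasis_coord_smul_add (h : AffineIndependent ℝ ![P, Q, R]) (x : Pt) :
    (triangleBasis h).coord 0 x • P + (triangleBasis h).coord 1 x • Q
      + (triangleBasis h).coord 2 x • R = x := by
  simpa [Fin.sum_univ_three] using (triangleBasis h).linear_combination_coord_eq_self x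

lemma convexHull_triple_eq_range (h : AffineIndependent ℝ ![P, Q, R]) :
    convexHull ℝ {P, Q, R} = convexHull ℝ (range (triangleBasis h)) := by
  rw [coe_triangleBasis, Matrix.range_cons, Matrix.range_cons, Matrix.range_cons,
    Matrix.range_empty]
  simp only [union_empty, singleton_union]

lemma mem_convexHull_triple_iff (h : AffineIndependent ℝ ![P, Q, R]) {x : Pt} :
    x ∈ convexHull ℝ {P, Q, R} ↔ ∀ i, 0 ≤ (triangleBasis h).coord i x := by
  rw [convexHull_triple_eq_range h, AffineBasis.convexHull_eq_nonneg_coord]; rfl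

lemma mem_interior_convexHull_triple_iff (h : AffineIndependent ℝ ![P, Q, R]) {x : Pt} :
    x ∈ interior (convexHull ℝ {P, Q, R}) ↔ ∀ i, 0 < (triangleBasis h).coord i x := by
  rw [convexHull_triple_eq_range h, AffineBasis.interior_convexHull]; rfl

lemma triangleBasis_coord_midpoint (h : AffineIndependent ℝ ![P, Q, R]) (i : Fin 3) :
    (triangleBasis h).coord i (midpoint ℝ P Q) = ![2⁻¹, 2⁻¹, 0] i := by
  have hP := (triangleBasis h).coord_apply i 0
  have hQ := (triangleBasis h).coord_apply i 1
  simp only [coe_triangleBasis, Matrix.cons_val_zero, Matrix.cons_val_one] at hP hQ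
  rw [map_midpoint, hP, hQ]
  fin_cases i <;> simp [midpoint_eq_smul_add]

lemma midpoint_notMem_interior_convexHull (h : AffineIndependent ℝ ![P, Q, R]) :
    midpoint ℝ P Q ∉ interior (convexHull ℝ {P, Q, R}) := by
  rw [mem_interior_convexHull_triple_iff h]
  intro hpos
  simpa [triangleBasis_coord_midpoint h 2] using hpos 2

lemma eq_lineMap_of_coord_two_eq_zero (h : AffineIndependent ℝ ![P, Q, R]) {x : Pt}
    (hx : (triangleBasis h).coord 2 x = 0) :
    x = lineMap P Q ((triangleBasis h).coord 1 x) := by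
  have hsum := triangleBasis_coord_add h x
  conv_lhs => rw [← triangleBasis_coord_smul_add h x]
  rw [lineMap_apply_module, hx,
    show (triangleBasis h).coord 0 x = 1 - (triangleBasis h).coord 1 x by linarith]
  module

/-- If `W` were strictly on the side of `R`, the points of the segment from the midpoint of `PQ`
towards `W` close to the midpoint would lie in the interior of the triangle. -/
lemma coord_two_nonpos_of_disjoint (h : AffineIndependent ℝ ![P, Q, R]) {S : Set Pt}
    (hS : Convex ℝ S) (hM : midpoint ℝ P Q ∈ S)
    (hdisj : Disjoint S (interior (convexHull ℝ {P, Q, R}))) {W : Pt} (hW : W ∈ S) :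
    (triangleBasis h).coord 2 W ≤ 0 := by
  by_contra! hpos
  have hlim : ∀ i, Tendsto (fun t : ℝ => (triangleBasis h).coord i (lineMap (midpoint ℝ P Q) W t))
      (𝓝[>] 0) (𝓝 ((triangleBasis h).coord i (midpoint ℝ P Q))) := fun i =>
    ((((triangleBasis h).coord i).continuous_of_finiteDimensional.comp
      lineMap_continuous).tendsto' 0 _ (by simp)).mono_left nhdsWithin_le_nhds
  have hcoord : ∀ i, ∀ᶠ t in 𝓝[>] (0 : ℝ),
      0 < (triangleBasis h).coord i (lineMap (midpoint ℝ P Q) W t) := by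
    intro i
    fin_cases i
    · exact (hlim 0).eventually_const_lt (by rw [triangleBasis_coord_midpoint]; norm_num)
    · exact (hlim 1).eventually_const_lt (by rw [triangleBasis_coord_midpoint]; norm_num)
    · filter_upwards [self_mem_nhdsWithin] with t (ht : 0 < t)
      show 0 < (triangleBasis h).coord 2 (lineMap (midpoint ℝ P Q) W t)
      rw [((triangleBasis h).coord 2).apply_lineMap, triangleBasis_coord_midpoint h 2]
      simpa [lineMap_apply_module] using mul_pos ht hpos
  obtain ⟨t, hpos, ht⟩ := ((eventually_all.2 hcoord).and (Ioo_mem_nhdsGT one_pos)).exists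
  exact hdisj.ne_of_mem (hS.lineMap_mem hM hW ⟨ht.1.le, ht.2.le⟩)
    ((mem_interior_convexHull_triple_iff h).2 hpos) rfl

end Barycentric

lemma eq_zero_of_mem_openSegment {E : Type*} [AddCommGroup E] [Module ℝ E] (f : E →ᵃ[ℝ] ℝ)
    {a b x : E} (ha : f a ≤ 0) (hb : f b ≤ 0) (hx : x ∈ openSegment ℝ a b) (hfx : f x = 0) :
    f a = 0 ∧ f b = 0 := by
  obtain ⟨α, β, hα, hβ, hαβ, rfl⟩ := hx
  rw [Convex.combo_affine_apply hαβ, smul_eq_mul, smul_eq_mul] at hfx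
  constructor <;> nlinarith [mul_nonpos_of_nonneg_of_nonpos hα.le ha,
    mul_nonpos_of_nonneg_of_nonpos hβ.le hb]

lemma bounds_of_norm_smul_add_smul_le {E : Type*} [NormedAddCommGroup E]
    [InnerProductSpace ℝ E] {X Y : E} {s a b : ℝ} (hs : 0 < s) (hX : ‖X‖ = s) (hY : ‖Y‖ = s)
    (hXY : ⟪X, Y⟫ = s ^ 2 / 2) (h : ‖a • X + b • Y‖ ≤ s / 6) :
    -3⁻¹ ≤ a ∧ -3⁻¹ ≤ b ∧ a + b ≤ 3⁻¹ := by
  have hbound : ∀ Z, ‖Z‖ = s → |⟪a • X + b • Y, Z⟫| ≤ s ^ 2 / 6 := fun Z hZ =>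
    calc |⟪a • X + b • Y, Z⟫| ≤ ‖a • X + b • Y‖ * ‖Z‖ := abs_real_inner_le_norm _ Z
      _ ≤ s / 6 * s := by rw [hZ]; gcongr
      _ = s ^ 2 / 6 := by ring
  have hX' := hbound X hX
  have hY' := hbound Y hY
  simp only [inner_add_left, real_inner_smul_left, real_inner_self_eq_norm_sq, hX, hY, hXY,
    real_inner_comm X Y] at hX' hY'
  rw [abs_le] at hX' hY'
  have hs2 : 0 < s ^ 2 := by positivity
  refine ⟨?_, ?_, ?_⟩ <;> nlinarith

namespace EqTri

section

variable (T : EqTri)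

lemma dist_B_C : dist T.B T.C = T.side := T.eqAB.symm

lemma dist_C_A : dist T.C T.A = T.side := (T.eqAB.trans T.eqBC).symm

lemma side_pos : 0 < T.side :=
  dist_pos.2 fun hAB => absurd (T.indep.injective (a₁ := 0) (a₂ := 1) hAB) (by decide)

lemma inner_sub_C_sub_C : ⟪T.A - T.C, T.B - T.C⟫ = T.side ^ 2 / 2 := by
  have h := norm_sub_sq_real (T.A - T.C) (T.B - T.C)
  rw [sub_sub_sub_cancel_right, ← dist_eq_norm, ← dist_eq_norm, ← dist_eq_norm,
    dist_comm T.A T.C, T.dist_C_A, T.dist_B_C] at h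
  rw [side] at h ⊢
  linarith

lemma convex_set : Convex ℝ T.set := convex_convexHull ℝ _

lemma isClosed_set : IsClosed T.set :=
  ((Set.finite_singleton _).insert _ |>.insert _).isCompact_convexHull ℝ |>.isClosed

lemma interior_set_nonempty : (interior T.set).Nonempty := by
  rw [EqTri.set, convexHull_triple_eq_range T.indep]
  exact ⟨_, (triangleBasis T.indep).centroid_mem_interior_convexHull⟩

lemma set_subset_closedBall_A : T.set ⊆ closedBall T.A T.side := by
  refine convexHull_min ?_ (convex_closedBall _ _)
  rintro x (rfl | rfl | rfl) <;> rw [mem_closedBall]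
  · simp [T.side_pos.le]
  · rw [dist_comm]; rfl
  · exact T.dist_C_A.le

lemma closedBall_centroid_subset_set :
    closedBall ((3 : ℝ)⁻¹ • (T.A + T.B + T.C)) (T.side / 6) ⊆ T.set := by
  intro x hx
  rw [EqTri.set, mem_convexHull_triple_iff T.indep]
  have hsum := triangleBasis_coord_add T.indep x
  have hxeq := triangleBasis_coord_smul_add T.indep x
  set α := (triangleBasis T.indep).coord 0 x
  set β := (triangleBasis T.indep).coord 1 x
  set γ := (triangleBasis T.indep).coord 2 x
  have hX : ‖T.A - T.C‖ = T.side := by rw [← dist_eq_norm, dist_comm]; exact T.dist_C_A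
  have hY : ‖T.B - T.C‖ = T.side := by rw [← dist_eq_norm]; exact T.dist_B_C
  have hu : ‖(α - 3⁻¹) • (T.A - T.C) + (β - 3⁻¹) • (T.B - T.C)‖ ≤ T.side / 6 := by
    rw [mem_closedBall, dist_eq_norm, ← hxeq] at hx
    rwa [show α • T.A + β • T.B + γ • T.C - (3 : ℝ)⁻¹ • (T.A + T.B + T.C)
      = (α - 3⁻¹) • (T.A - T.C) + (β - 3⁻¹) • (T.B - T.C) by
        rw [show γ = 1 - α - β by linarith]; module] at hx
  obtain ⟨hα, hβ, hγ⟩ :=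
    bounds_of_norm_smul_add_smul_le T.side_pos hX hY T.inner_sub_C_sub_C hu
  intro i
  fin_cases i <;> simp only [Fin.zero_eta, Fin.mk_one, Fin.reduceFinMk] <;> linarith

lemma exists_ball_subset_interior {c : ℝ} (hc : 0 < c) (hcs : c ≤ T.side) {x : Pt}
    (hx : x ∈ T.set) : ∃ g, dist g x ≤ 2 * c ∧ ball g (c / 6) ⊆ interior T.set := by
  set s := T.side
  set G : Pt := (3 : ℝ)⁻¹ • (T.A + T.B + T.C)
  have hs : 0 < s := T.side_pos
  set t := c / s
  have ht : 0 < t := by positivity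
  have ht1 : t ≤ 1 := div_le_one_of_le₀ hcs hs.le
  have hG : G ∈ T.set := T.closedBall_centroid_subset_set (mem_closedBall_self (by positivity))
  refine ⟨x + t • (G - x), ?_, interior_maximal ?_ isOpen_ball⟩
  · have hGx : dist G x ≤ 2 * s :=
      (dist_triangle G T.A x).trans <| by
        rw [dist_comm T.A x]
        linarith [mem_closedBall.1 (T.set_subset_closedBall_A hG),
          mem_closedBall.1 (T.set_subset_closedBall_A hx)]
    rw [dist_eq_norm, add_sub_cancel_left, norm_smul, Real.norm_of_nonneg ht.le, ← dist_eq_norm]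
    calc t * dist G x ≤ t * (2 * s) := by gcongr
      _ = 2 * c := by simp only [t]; field_simp
  · intro y hy
    -- `y` is the image of `z` under the homothety of ratio `t` about `x`
    set z := x + t⁻¹ • (y - x)
    have hz : z ∈ T.set := by
      refine T.closedBall_centroid_subset_set ?_
      rw [mem_ball, dist_eq_norm] at hy
      rw [mem_closedBall, dist_eq_norm,
        show z - G = t⁻¹ • (y - (x + t • (G - x))) by
          rw [sub_add_eq_sub_sub, smul_sub, smul_smul, inv_mul_cancel₀ ht.ne', one_smul]
          simp only [z]; abel, norm_smul,
        Real.norm_of_nonneg (inv_nonneg.2 ht.le)]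
      calc t⁻¹ * ‖y - (x + t • (G - x))‖ ≤ t⁻¹ * (c / 6) := by gcongr
        _ = s / 6 := by simp only [t]; field_simp
    have := T.convex_set.add_smul_sub_mem hx hz ⟨ht.le, ht1⟩
    rwa [show x + t • (z - x) = y by
      simp only [z, add_sub_cancel_left, smul_smul, mul_inv_cancel₀ ht.ne', one_smul,
        add_sub_cancel]] at this

lemma disjoint_set_interior {T' : EqTri} (h : Disjoint (interior T.set) (interior T'.set)) :
    Disjoint T.set (interior T'.set) := by
  have := h.closure_left isOpen_interior
  rwa [T.convex_set.closure_interior_eq_closure_of_nonempty_interior T.interior_set_nonempty,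
    T.isClosed_set.closure_eq] at this

lemma exists_isEdge_mem_segment {x : Pt} (hx : x ∈ T.set) (hx' : x ∉ interior T.set) :
    ∃ E₁ E₂, T.IsEdge E₁ E₂ ∧ x ∈ segment ℝ E₁ E₂ := by
  rw [set, mem_convexHull_triple_iff T.indep] at hx
  rw [set, mem_interior_convexHull_triple_iff T.indep] at hx'
  push Not at hx'
  obtain ⟨i, hi⟩ := hx'
  have hi0 := le_antisymm hi (hx i)
  have hsum := triangleBasis_coord_add T.indep x
  have hxeq := triangleBasis_coord_smul_add T.indep x
  fin_cases i <;> simp only [Fin.zero_eta, Fin.mk_one, Fin.reduceFinMk] at hi0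
  · exact ⟨T.B, T.C, by simp [IsEdge], _, _, hx 1, hx 2, by linarith, by simpa [hi0] using hxeq⟩
  · exact ⟨T.A, T.C, by simp [IsEdge], _, _, hx 0, hx 2, by linarith, by simpa [hi0] using hxeq⟩
  · exact ⟨T.A, T.B, by simp [IsEdge], _, _, hx 0, hx 1, by linarith, by simpa [hi0] using hxeq⟩

end

namespace IsEdge

variable {T : EqTri} {P Q : Pt}

lemma mem_vertices (h : T.IsEdge P Q) : P ∈ T.vertices ∧ Q ∈ T.vertices := by
  rcases h with ⟨rfl, rfl⟩ | ⟨rfl, rfl⟩ | ⟨rfl, rfl⟩ | ⟨rfl, rfl⟩ | ⟨rfl, rfl⟩ | ⟨rfl, rfl⟩ <;>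
    simp [vertices]

lemma segment_mem_edges (h : T.IsEdge P Q) : segment ℝ P Q ∈ T.edges := by
  rcases h with ⟨rfl, rfl⟩ | ⟨rfl, rfl⟩ | ⟨rfl, rfl⟩ | ⟨rfl, rfl⟩ | ⟨rfl, rfl⟩ | ⟨rfl, rfl⟩ <;>
    simp [edges, segment_symm]

lemma exists_third (h : T.IsEdge P Q) :
    ∃ R, T.set = convexHull ℝ {P, Q, R} ∧ AffineIndependent ℝ ![P, Q, R] := by
  obtain ⟨R, hR⟩ : ∃ R, ({P, Q, R} : Set Pt) = {T.A, T.B, T.C} := by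
    rcases h with ⟨rfl, rfl⟩ | ⟨rfl, rfl⟩ | ⟨rfl, rfl⟩ | ⟨rfl, rfl⟩ | ⟨rfl, rfl⟩ | ⟨rfl, rfl⟩ <;>
      [refine ⟨T.C, ?_⟩; refine ⟨T.C, ?_⟩; refine ⟨T.A, ?_⟩; refine ⟨T.A, ?_⟩;
        refine ⟨T.B, ?_⟩; refine ⟨T.B, ?_⟩] <;>
      ext <;> simp only [mem_insert_iff, mem_singleton_iff] <;> tauto
  refine ⟨R, by rw [set, hR], ?_⟩
  rw [affineIndependent_iff_not_collinear_set, hR]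
  exact affineIndependent_iff_not_collinear_set.1 T.indep

lemma ne (h : T.IsEdge P Q) : P ≠ Q :=
  let ⟨_, _, hind⟩ := h.exists_third
  hind.injective.ne (a₁ := 0) (a₂ := 1) (by decide)

end IsEdge

end EqTri

section Tiling

variable {𝒯 : Set EqTri}

lemma finite_setOf_inter_closedBall_nonempty
    (hdisj : 𝒯.Pairwise fun T T' => Disjoint (interior T.set) (interior T'.set))
    (hside : SidesBoundedBelow 𝒯) (x : Pt) (r : ℝ) :
    {T ∈ 𝒯 | (T.set ∩ closedBall x r).Nonempty}.Finite := by
  obtain ⟨c, hc, hside⟩ := hside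
  set F := {T ∈ 𝒯 | (T.set ∩ closedBall x r).Nonempty}
  have hball : ∀ T : F, ∃ g, ball g (c / 6) ⊆ interior T.1.set ∧
      ball g (c / 6) ⊆ closedBall x (r + 3 * c) := by
    rintro ⟨T, hT, y, hyT, hyx⟩
    obtain ⟨g, hgy, hg⟩ := T.exists_ball_subset_interior hc (hside T hT) hyT
    refine ⟨g, hg, fun z hz => ?_⟩
    rw [mem_ball] at hz
    rw [mem_closedBall] at hyx ⊢
    linarith [dist_triangle4 z g y x]
  choose g hg hgx using hball
  have hfin := Measure.finite_const_le_meas_of_disjoint_iUnion volume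
    (measure_ball_pos volume (0 : Pt) (by positivity : 0 < c / 6))
    (fun T => measurableSet_ball)
    (fun T T' hne => (hdisj T.2.1 T'.2.1 (Subtype.coe_injective.ne hne)).mono (hg T) (hg T'))
    (measure_mono (iUnion_subset hgx) |>.trans_lt measure_closedBall_lt_top).ne
  simp only [Measure.addHaar_ball_center, le_refl, ofPred_true] at hfin
  exact finite_coe_iff.1 (finite_univ_iff.1 hfin)

lemma locallyFinite_set
    (hdisj : 𝒯.Pairwise fun T T' => Disjoint (interior T.set) (interior T'.set))
    (hside : SidesBoundedBelow 𝒯) : LocallyFinite fun T : 𝒯 => T.1.set := fun x =>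
  ⟨closedBall x 1, closedBall_mem_nhds x one_pos,
    ((finite_setOf_inter_closedBall_nonempty hdisj hside x 1).preimage
      Subtype.val_injective.injOn).subset fun T hT => ⟨T.2, hT⟩⟩

lemma exists_ne_mem_set_of_notMem_interior (h𝒯 : IsTiling 𝒯) (hside : SidesBoundedBelow 𝒯)
    {T : EqTri} (hT : T ∈ 𝒯) {x : Pt} (hx : x ∉ interior T.set) :
    ∃ T' ∈ 𝒯, T' ≠ T ∧ x ∈ T'.set := by
  set U := ⋃ T' : {T' : 𝒯 // T' ≠ ⟨T, hT⟩}, T'.1.1.set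
  have hU : IsClosed U := ((locallyFinite_set h𝒯.1 hside).comp_injective
    Subtype.val_injective).isClosed_iUnion fun T' => T'.1.1.isClosed_set
  have hcompl : T.setᶜ ⊆ U := by
    intro y hy
    obtain ⟨T', hT', hyT'⟩ := mem_iUnion₂.1 (h𝒯.2.symm ▸ mem_univ y)
    refine mem_iUnion.2 ⟨⟨⟨T', hT'⟩, ?_⟩, hyT'⟩
    rintro ⟨⟩
    exact hy hyT'
  have hx' : x ∈ closure T.setᶜ := by rwa [closure_compl]
  obtain ⟨⟨⟨T', hT'⟩, hne⟩, hxT'⟩ := mem_iUnion.1 (hU.closure_subset_iff.2 hcompl hx')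
  exact ⟨T', hT', fun h => hne (Subtype.ext h), hxT'⟩

end Tiling

lemma zero_or_one_mem_openSegment {t₁ t₂ : ℝ} (h₁ : t₁ ∉ Ioo 0 1) (h₂ : t₂ ∉ Ioo 0 1)
    (hhalf : 2⁻¹ ∈ openSegment ℝ t₁ t₂) (h01 : ¬(t₁ = 0 ∧ t₂ = 1))
    (h10 : ¬(t₁ = 1 ∧ t₂ = 0)) :
    0 ∈ openSegment ℝ t₁ t₂ ∨ 1 ∈ openSegment ℝ t₁ t₂ := by
  have hne : t₁ ≠ t₂ := by
    rintro rfl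
    rw [openSegment_same, mem_singleton_iff] at hhalf
    exact h₁ (hhalf ▸ ⟨by norm_num, by norm_num⟩)
  rw [openSegment_eq_Ioo' hne] at hhalf ⊢
  simp only [mem_Ioo, min_def, max_def] at *
  split_ifs at * <;> grind

lemma continuesAt_or_of_isEdge_lineMap {𝒯 : Set EqTri} (hshare : NoSharedSide 𝒯)
    {T T' : EqTri} (hT : T ∈ 𝒯) (hT' : T' ∈ 𝒯) (hne : T' ≠ T) {P Q : Pt} (hPQ : T.IsEdge P Q)
    (hcut : ¬ Subdivided 𝒯 T P Q) {E₁ E₂ : Pt} (hE : T'.IsEdge E₁ E₂)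
    (hM : midpoint ℝ P Q ∈ openSegment ℝ E₁ E₂) {t₁ t₂ : ℝ}
    (h₁ : E₁ = lineMap P Q t₁) (h₂ : E₂ = lineMap P Q t₂) :
    ContinuesAt 𝒯 T P Q ∨ ContinuesAt 𝒯 T Q P := by
  have hseg : openSegment ℝ E₁ E₂ = lineMap P Q '' openSegment ℝ t₁ t₂ := by
    rw [image_openSegment, h₁, h₂]
  have hvert : ∀ t, lineMap P Q t ∈ T'.vertices → t ∉ Ioo (0 : ℝ) 1 := fun t ht hmem =>
    hcut ⟨T', hT', hne, _, ht, by rw [openSegment_eq_image_lineMap]; exact mem_image_of_mem _ hmem⟩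
  have hhalf : 2⁻¹ ∈ openSegment ℝ t₁ t₂ := by
    rw [hseg] at hM
    obtain ⟨t, ht, hLt⟩ := hM
    have ht2 : t = 2⁻¹ :=
      lineMap_injective ℝ hPQ.ne (hLt.trans (by rw [midpoint, invOf_eq_inv]))
    rwa [ht2] at ht
  have hside : segment ℝ E₁ E₂ ≠ segment ℝ P Q :=
    (hshare T hT T' hT' hne.symm _ hPQ.segment_mem_edges _ hE.segment_mem_edges).symm
  have h01 : ¬(t₁ = 0 ∧ t₂ = 1) := by
    rintro ⟨rfl, rfl⟩
    exact hside (by simp [h₁, h₂])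
  have h10 : ¬(t₁ = 1 ∧ t₂ = 0) := by
    rintro ⟨rfl, rfl⟩
    exact hside (by simp [h₁, h₂, segment_symm])
  rcases zero_or_one_mem_openSegment (hvert t₁ (h₁ ▸ hE.mem_vertices.1))
    (hvert t₂ (h₂ ▸ hE.mem_vertices.2)) hhalf h01 h10 with h0 | h1
  · refine .inl ⟨T', hT', hne, E₁, E₂, hE, ?_, _, openSegment_subset_segment _ _ _ hM,
      midpoint_mem_openSegment P Q⟩
    rw [hseg]
    exact ⟨0, h0, lineMap_apply_zero _ _⟩
  · refine .inr ⟨T', hT', hne, E₁, E₂, hE, ?_, _, openSegment_subset_segment _ _ _ hM,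
      openSegment_symm ℝ P Q ▸ midpoint_mem_openSegment P Q⟩
    rw [hseg]
    exact ⟨1, h1, lineMap_apply_one _ _⟩

/-- In `𝒯`, every uncut edge of a triangle continues at least at one of its endpoints. -/
theorem stmt_5 (𝒯 : Set EqTri) (h : GoodTiling 𝒯) :
    ∀ T ∈ 𝒯, ∀ P Q : Pt, T.IsEdge P Q → ¬ Subdivided 𝒯 T P Q →
      ContinuesAt 𝒯 T P Q ∨ ContinuesAt 𝒯 T Q P := by
  intro T hT P Q hPQ hcut
  obtain ⟨h𝒯, hside, hshare⟩ := h
  obtain ⟨R, hset, hind⟩ := hPQ.exists_third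
  have hMT : midpoint ℝ P Q ∈ T.set :=
    hset ▸ segment_subset_convexHull (by simp) (by simp) (midpoint_mem_segment P Q)
  obtain ⟨T', hT', hne, hMT'⟩ := exists_ne_mem_set_of_notMem_interior h𝒯 hside hT
    (hset ▸ midpoint_notMem_interior_convexHull hind)
  obtain ⟨E₁, E₂, hE, hME⟩ := T'.exists_isEdge_mem_segment hMT'
    fun hint => (T.disjoint_set_interior (h𝒯.1 T hT T' hT' hne.symm)).ne_of_mem hMT hint rfl
  have hMopen : midpoint ℝ P Q ∈ openSegment ℝ E₁ E₂ := by
    refine mem_openSegment_of_ne_left_right ?_ ?_ hME <;> rintro hEM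
    · exact hcut ⟨T', hT', hne, E₁, hE.mem_vertices.1, hEM ▸ midpoint_mem_openSegment P Q⟩
    · exact hcut ⟨T', hT', hne, E₂, hE.mem_vertices.2, hEM ▸ midpoint_mem_openSegment P Q⟩
  have hcoord : ∀ W ∈ T'.set, (triangleBasis hind).coord 2 W ≤ 0 :=
    fun W => coord_two_nonpos_of_disjoint hind T'.convex_set hMT'
      (hset ▸ T'.disjoint_set_interior (h𝒯.1 T' hT' T hT hne))
  obtain ⟨hE₁, hE₂⟩ := eq_zero_of_mem_openSegment _
    (hcoord E₁ (subset_convexHull ℝ _ hE.mem_vertices.1))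
    (hcoord E₂ (subset_convexHull ℝ _ hE.mem_vertices.2)) hMopen
    (triangleBasis_coord_midpoint hind 2)
  exact continuesAt_or_of_isEdge_lineMap hshare hT hT' hne hPQ hcut hE hMopen
    (eq_lineMap_of_coord_two_eq_zero hind hE₁) (eq_lineMap_of_coord_two_eq_zero hind hE₂)
end
end
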